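/- arXiv:2604.22377 — 5 statements merged into one kernel-verified Lean document; each statement's English description precedes it below -/
import Mathlib

section
/- The sum over nonnegative integers k of 1/((3k+1)(k+1)) equals (π√3)/12 + (3/4)·log 3. -/
/-! Since `1 / ((3k+1)(k+1)) = (3/2) ∫₀¹ (x^{3k} - x^{3k+2}) dx` and these integrands are
nonnegative on `(0, 1)`, the series may be summed under the integral sign; the geometric series
gives `∑ₖ (x^{3k} - x^{3k+2}) = (1 - x²)/(1 - x³) = (x + 1)/(x² + x + 1)`, whose integral over
`[0, 1]` is computed with the primitive `log (x² + x + 1) / 2 + (√3/3) arctan ((2x + 1)/√3)`. -/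

open Real MeasureTheory Set

theorem hasSum_integral_of_nonneg {α : Type*} [MeasurableSpace α] {μ : Measure α}
    {F : ℕ → α → ℝ} {f : α → ℝ} (hF_meas : ∀ n, AEStronglyMeasurable (F n) μ)
    (hF_nonneg : ∀ n, 0 ≤ᵐ[μ] F n) (hf : Integrable f μ)
    (h_lim : ∀ᵐ a ∂μ, HasSum (fun n => F n a) (f a)) :
    HasSum (fun n => ∫ a, F n a ∂μ) (∫ a, f a ∂μ) :=
  hasSum_integral_of_dominated_convergence F hF_meas
    (fun n => (hF_nonneg n).mono fun _ ha => (Real.norm_of_nonneg ha).le)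
    (h_lim.mono fun _ ha => ha.summable)
    (hf.congr (h_lim.mono fun _ ha => ha.tsum_eq.symm)) h_lim

theorem sq_add_self_add_one_pos (x : ℝ) : 0 < x ^ 2 + x + 1 := by
  nlinarith [sq_nonneg (x + 1 / 2)]

theorem continuous_add_one_div_sq_add_self_add_one :
    Continuous fun x : ℝ => (x + 1) / (x ^ 2 + x + 1) := by
  fun_prop (disch := exact fun x => (sq_add_self_add_one_pos x).ne')

theorem hasSum_pow_sub_pow {x : ℝ} (hx : |x| < 1) :
    HasSum (fun k : ℕ => x ^ (3 * k) - x ^ (3 * k + 2)) ((x + 1) / (x ^ 2 + x + 1)) := by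
  have hx3 : |x ^ 3| < 1 := by
    rw [abs_pow]; exact pow_lt_one₀ (abs_nonneg x) hx (by norm_num)
  have hterm : (fun k : ℕ => x ^ (3 * k) - x ^ (3 * k + 2)) =
      fun k => (1 - x ^ 2) * (x ^ 3) ^ k := by
    ext k; rw [pow_add, pow_mul]; ring
  have hval : (x + 1) / (x ^ 2 + x + 1) = (1 - x ^ 2) * (1 - x ^ 3)⁻¹ := by
    have : 1 - x ^ 3 ≠ 0 := sub_ne_zero.2 ((le_abs_self _).trans_lt hx3).ne'
    rw [div_eq_iff (sq_add_self_add_one_pos x).ne']; field_simp; ring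
  rw [hterm, hval]
  exact (hasSum_geometric_of_abs_lt_one hx3).mul_left _

theorem hasDerivAt_log_add_arctan (x : ℝ) :
    HasDerivAt (fun x => log (x ^ 2 + x + 1) / 2 + √3 / 3 * arctan ((2 * x + 1) / √3))
      ((x + 1) / (x ^ 2 + x + 1)) x := by
  have hq := (sq_add_self_add_one_pos x).ne'
  have hlog : HasDerivAt (fun x => log (x ^ 2 + x + 1) / 2)
      ((2 * x + 1) / (x ^ 2 + x + 1) / 2) x := by
    simpa using ((((hasDerivAt_pow 2 x).add (hasDerivAt_id x)).add_const 1).log hq).div_const 2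
  have harc : HasDerivAt (fun x => √3 / 3 * arctan ((2 * x + 1) / √3))
      (√3 / 3 * (1 / (1 + ((2 * x + 1) / √3) ^ 2) * (2 / √3))) x := by
    simpa using
      ((((hasDerivAt_id x).const_mul 2).add_const 1).div_const √3).arctan.const_mul (√3 / 3)
  refine (hlog.add harc).congr_deriv ?_
  have harg : 1 + ((2 * x + 1) / √3) ^ 2 = 4 * (x ^ 2 + x + 1) / 3 := by
    rw [div_pow, sq_sqrt (by norm_num)]; ring
  rw [harg]
  field_simp
  ring

theorem integral_add_one_div_sq_add_self_add_one :
    ∫ x in (0 : ℝ)..1, (x + 1) / (x ^ 2 + x + 1) = log 3 / 2 + π * √3 / 18 := by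
  rw [intervalIntegral.integral_eq_sub_of_hasDerivAt (fun x _ => hasDerivAt_log_add_arctan x)
    (continuous_add_one_div_sq_add_self_add_one.intervalIntegrable 0 1)]
  have h1 : (2 * 1 + 1) / √3 = √3 := by
    rw [div_eq_iff (by positivity)]; norm_num
  have h0 : (2 * 0 + 1) / √3 = (√3)⁻¹ := by norm_num
  norm_num [h1, h0, arctan_sqrt_three, arctan_inv_sqrt_three]
  ring

theorem integral_pow_sub_pow (k : ℕ) :
    ∫ x in (0 : ℝ)..1, x ^ (3 * k) - x ^ (3 * k + 2) = 2 / 3 * (1 / ((3 * k + 1) * (k + 1))) := by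
  rw [intervalIntegral.integral_sub (intervalIntegral.intervalIntegrable_pow _)
    (intervalIntegral.intervalIntegrable_pow _), integral_pow, integral_pow]
  field_simp
  push_cast
  ring

theorem sum_inv_3k1_k1 :
    ∑' k : ℕ, (1 : ℝ) / ((3 * (k : ℝ) + 1) * ((k : ℝ) + 1)) =
      Real.pi * Real.sqrt 3 / 12 + (3 / 4) * Real.log 3 := by
  have hIoo (f : ℝ → ℝ) : ∫ x in (0 : ℝ)..1, f x = ∫ x in Ioo 0 1, f x := by
    rw [intervalIntegral.integral_of_le zero_le_one, integral_Ioc_eq_integral_Ioo]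
  have hnonneg (k : ℕ) :
      ∀ᵐ x ∂volume.restrict (Ioo (0 : ℝ) 1), 0 ≤ x ^ (3 * k) - x ^ (3 * k + 2) :=
    (ae_restrict_iff' measurableSet_Ioo).2 <| .of_forall fun x hx =>
      sub_nonneg.2 (pow_le_pow_of_le_one hx.1.le hx.2.le (by omega))
  have hlim : ∀ᵐ x ∂volume.restrict (Ioo (0 : ℝ) 1),
      HasSum (fun k : ℕ => x ^ (3 * k) - x ^ (3 * k + 2)) ((x + 1) / (x ^ 2 + x + 1)) :=
    (ae_restrict_iff' measurableSet_Ioo).2 <| .of_forall fun x hx =>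
      hasSum_pow_sub_pow (abs_lt.2 ⟨by linarith [hx.1], hx.2⟩)
  have hint : IntegrableOn (fun x : ℝ => (x + 1) / (x ^ 2 + x + 1)) (Ioo 0 1) :=
    continuous_add_one_div_sq_add_self_add_one.integrableOn_Icc.mono_set Ioo_subset_Icc_self
  have hsum := hasSum_integral_of_nonneg (fun k => by fun_prop) hnonneg hint hlim
  simp only [← hIoo, integral_pow_sub_pow, integral_add_one_div_sq_add_self_add_one] at hsum
  rw [show log 3 / 2 + π * √3 / 18 = 2 / 3 * (π * √3 / 12 + 3 / 4 * log 3) by ring,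
    hasSum_mul_left_iff (by norm_num)] at hsum
  exact hsum.tsum_eq
end

section
/- The sum over nonnegative integers k of 1/((3k+2)(3k+4)) equals 1/2 − (√3·π)/18. -/
/-! Evaluate the Mittag-Leffler expansion of the cotangent,
`π cot (π x) - 1 / x = ∑ₙ (1 / (x - (n + 1)) + 1 / (x + (n + 1)))`, at `x = 1 / 3`:
there the `n`-th term is `-6 / ((3n + 2)(3n + 4))`, and `cot (π / 3) = √3 / 3`. -/

open Real

theorem Real.hasSum_cot_series {x : ℝ} (hx : ∀ n : ℤ, x ≠ n) :
    HasSum (fun n : ℕ => 1 / (x - (n + 1)) + 1 / (x + (n + 1))) (π * cot (π * x) - 1 / x) := by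
  have hz : (x : ℂ) ∈ Complex.integerComplement := by
    rintro ⟨n, hn⟩
    exact hx n (by exact_mod_cast hn.symm)
  rw [← Complex.hasSum_ofReal]
  push_cast
  rw [cot_series_rep' hz]
  exact (summable_cotTerm hz).hasSum

theorem Real.cot_pi_div_three : cot (π / 3) = √3 / 3 := by
  rw [cot_eq_cos_div_sin, cos_pi_div_three, sin_pi_div_three]
  field_simp
  simp

theorem sum_inv_3k2_3k4 :
    ∑' k : ℕ, (1 : ℝ) / ((3 * (k : ℝ) + 2) * (3 * (k : ℝ) + 4)) =
      1 / 2 - Real.sqrt 3 * Real.pi / 18 := by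
  have h_not_int : ∀ n : ℤ, (1 / 3 : ℝ) ≠ n := by
    intro n hn
    have h3n : (3 * n : ℝ) = 1 := by rw [← hn]; norm_num
    norm_cast at h3n
    omega
  have hterm (k : ℕ) : 1 / (1 / 3 - ((k : ℝ) + 1)) + 1 / (1 / 3 + ((k : ℝ) + 1)) =
      -6 * (1 / ((3 * (k : ℝ) + 2) * (3 * (k : ℝ) + 4))) := by
    rw [show 1 / 3 - ((k : ℝ) + 1) = -(3 * k + 2) / 3 by ring,
      show 1 / 3 + ((k : ℝ) + 1) = (3 * k + 4) / 3 by ring]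
    field_simp
    ring
  have hsum := (Real.hasSum_cot_series h_not_int).tsum_eq
  simp only [hterm] at hsum
  rw [tsum_mul_left, mul_one_div π, cot_pi_div_three] at hsum
  linear_combination hsum / (-6)
end

section
/- The sum over nonnegative integers n of 1/C(2n,n) equals (2/27)·(18 + √3·π), where C(2n,n) is the central binomial coefficient. -/
/-!
Since `1 / C(2n, n) = (2n + 1) B(n + 1, n + 1) = (2n + 1) ∫₀¹ (x (1 - x))ⁿ dx` and
`∑ (2n + 1) tⁿ = (1 + t) / (1 - t)²`, summing under the integral sign turns the series into
`∫₀¹ (1 + x (1 - x)) / (1 - x (1 - x))² dx`, which has an elementary antiderivative: a rational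
function plus a multiple of `arctan ((2x - 1) / √3)`.
-/

open Nat Real

theorem integral_pow_mul_one_sub_pow (m n : ℕ) :
    ∫ x in (0 : ℝ)..1, x ^ m * (1 - x) ^ n = m ! * n ! / (m + n + 1)! := by
  have hbeta : Complex.betaIntegral (m + 1) (n + 1) =
      ((∫ x in (0 : ℝ)..1, x ^ m * (1 - x) ^ n : ℝ) : ℂ) := by
    rw [Complex.betaIntegral, ← intervalIntegral.integral_ofReal]
    refine intervalIntegral.integral_congr fun x _ => ?_
    simp only [add_sub_cancel_right, Complex.cpow_natCast]
    push_cast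
    rfl
  have hGamma := Complex.Gamma_mul_Gamma_eq_betaIntegral (s := m + 1) (t := n + 1)
    (by simp; positivity) (by simp; positivity)
  rw [show (m + 1 + (n + 1) : ℂ) = ((m + n + 1 : ℕ) : ℂ) + 1 by push_cast; ring,
    Complex.Gamma_nat_eq_factorial, Complex.Gamma_nat_eq_factorial,
    Complex.Gamma_nat_eq_factorial, hbeta] at hGamma
  rw [eq_div_iff (by positivity), mul_comm]
  exact_mod_cast hGamma.symm

theorem inv_centralBinom_eq_integral (n : ℕ) :
    (centralBinom n : ℝ)⁻¹ = ∫ x in (0 : ℝ)..1, (2 * n + 1) * (x * (1 - x)) ^ n := by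
  have hfact : (centralBinom n : ℝ) * (n ! * n !) = (2 * n)! := by
    have := Nat.choose_mul_factorial_mul_factorial (show n ≤ 2 * n by omega)
    rw [show 2 * n - n = n by omega, mul_assoc] at this
    exact_mod_cast this
  have hsucc : ((2 * n + 1)! : ℝ) = (2 * n + 1) * (2 * n)! := by
    exact_mod_cast Nat.factorial_succ (2 * n)
  have hpos : (centralBinom n : ℝ) ≠ 0 := by exact_mod_cast centralBinom_ne_zero n
  simp_rw [mul_pow, intervalIntegral.integral_const_mul, integral_pow_mul_one_sub_pow,
    show n + n + 1 = 2 * n + 1 by ring, hsucc, ← hfact]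
  field_simp

theorem hasSum_two_mul_add_one_mul_geometric {𝕜 : Type*} [NormedField 𝕜] {r : 𝕜}
    (hr : ‖r‖ < 1) :
    HasSum (fun n : ℕ => (2 * n + 1) * r ^ n) ((1 + r) / (1 - r) ^ 2) := by
  have hr1 : (1 : 𝕜) - r ≠ 0 := by
    intro h
    rw [sub_eq_zero] at h
    simp [← h] at hr
  convert! ((hasSum_coe_mul_geometric_of_norm_lt_one hr).mul_left 2).add
    (hasSum_geometric_of_norm_lt_one hr) using 1
  · ext n
    ring
  · field_simp
    ring

theorem abs_mul_one_sub_le {x : ℝ} (hx₀ : 0 ≤ x) (hx₁ : x ≤ 1) : |x * (1 - x)| ≤ 1 / 4 := by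
  rw [abs_of_nonneg (by nlinarith)]
  nlinarith [sq_nonneg (x - 1 / 2)]

/-- On `[0, 1]` the `n`-th term of the series under the integral is dominated by the constant
`(2n + 1) / 4ⁿ`. -/
theorem hasSum_inv_centralBinom :
    HasSum (fun n => (centralBinom n : ℝ)⁻¹)
      (∫ x in (0 : ℝ)..1, (1 + x * (1 - x)) / (1 - x * (1 - x)) ^ 2) := by
  simp_rw [inv_centralBinom_eq_integral]
  refine intervalIntegral.hasSum_integral_of_dominated_convergence
    (fun n _ => (2 * n + 1) * (1 / 4 : ℝ) ^ n) (fun n => by fun_prop)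
    (fun n => .of_forall fun x hx => ?_)
    (.of_forall fun _ _ => (hasSum_two_mul_add_one_mul_geometric (by norm_num)).summable)
    intervalIntegrable_const (.of_forall fun x hx => ?_)
  all_goals
    rw [Set.uIoc_of_le zero_le_one] at hx
    have hx4 := abs_mul_one_sub_le hx.1.le hx.2
  · rw [norm_mul, norm_pow, Real.norm_eq_abs, Real.norm_eq_abs, abs_of_pos (by positivity)]
    gcongr
  · exact hasSum_two_mul_add_one_mul_geometric (by rw [Real.norm_eq_abs]; linarith)

theorem mul_one_sub_lt_one (x : ℝ) : x * (1 - x) < 1 := by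
  nlinarith [sq_nonneg (x - 1 / 2)]

theorem hasDerivAt_div_add_arctan (x : ℝ) :
    HasDerivAt
      (fun x => (4 * x - 2) / (3 * (x ^ 2 - x + 1)) + 2 * √3 / 9 * arctan ((2 * x - 1) / √3))
      ((1 + x * (1 - x)) / (1 - x * (1 - x)) ^ 2) x := by
  have hq : 0 < x ^ 2 - x + 1 := by linarith [mul_one_sub_lt_one x]
  have hs2 : √3 ^ 2 = 3 := Real.sq_sqrt (by norm_num)
  have hrat := ((hasDerivAt_id x).const_mul 4 |>.sub_const 2).div
    (((hasDerivAt_pow 2 x).sub (hasDerivAt_id x) |>.add_const 1).const_mul 3) (by positivity)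
  have harctan := ((hasDerivAt_id x).const_mul 2 |>.sub_const 1 |>.div_const √3).arctan
    |>.const_mul (2 * √3 / 9)
  refine (hrat.add harctan).congr_deriv ?_
  simp only [Pi.sub_apply, id, div_pow, hs2, show 1 - x * (1 - x) = x ^ 2 - x + 1 by ring]
  rw [show 1 + (2 * x - 1) ^ 2 / 3 = 4 * (x ^ 2 - x + 1) / 3 by ring]
  field_simp
  ring

theorem integral_one_add_div_one_sub_sq :
    ∫ x in (0 : ℝ)..1, (1 + x * (1 - x)) / (1 - x * (1 - x)) ^ 2 = 2 / 27 * (18 + √3 * π) := by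
  have hcont : Continuous fun x : ℝ => (1 + x * (1 - x)) / (1 - x * (1 - x)) ^ 2 := by
    fun_prop (disch := exact fun x => by have := mul_one_sub_lt_one x; positivity)
  rw [intervalIntegral.integral_eq_sub_of_hasDerivAt (fun x _ => hasDerivAt_div_add_arctan x)
    (hcont.intervalIntegrable 0 1)]
  norm_num [arctan_inv_sqrt_three]
  rw [neg_div, arctan_neg, one_div, arctan_inv_sqrt_three]
  ring

theorem sum_inv_centralBinom :
    ∑' n : ℕ, (1 : ℝ) / (Nat.choose (2 * n) n : ℝ) =
      (2 / 27) * (18 + Real.sqrt 3 * Real.pi) := by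
  simp only [one_div, ← centralBinom_eq_two_mul_choose]
  rw [hasSum_inv_centralBinom.tsum_eq, integral_one_add_div_one_sub_sq]
end

section
/- For every positive integer n, (−1)^n · n!^10 · (205n² + 250n + 77) / (64 · ((2n+1)!)^5) summed over all n ≥ 0 equals ζ(3), i.e., ∑_{n=0}^∞ (−1)^n (205n²+250n+77) (n!)^{10} / (64 ((2n+1)!)^5) = ζ(3). -/
/-!
The Amdeberhan–Zeilberger functions `F`, `G` form a WZ pair:
`F (n + 1) k - F n k = G n (k + 1) - G n k`. Summing this over the staircase `n ≤ k < K`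
telescopes to `∑_{k<K} F 0 k = ∑_{k<K} (F (k + 1) k + G k k) - ∑_{n<K} G n K`.
Here `F 0 k = 1 / (k + 1)^3`, the diagonal terms `F (k + 1) k + G k k` are the terms of the fast
series, and the last sum is `O(1/K)` because `n! K! / (n + K + 1)! ≤ 1 / (K + 1)`.
-/

open Filter Topology Finset
open scoped Nat

section WZPair

variable {α : Type*} [AddCommGroup α]

def IsWZPair (F G : ℕ → ℕ → α) : Prop :=
  ∀ n k, F (n + 1) k - F n k = G n (k + 1) - G n k

theorem IsWZPair.sum_range_zero_eq {F G : ℕ → ℕ → α} (h : IsWZPair F G) (K : ℕ) :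
    ∑ k ∈ range K, F 0 k =
      ∑ k ∈ range K, (F (k + 1) k + G k k) - ∑ n ∈ range K, G n K := by
  induction K with
  | zero => simp
  | succ K ih =>
    have column : ∑ n ∈ range (K + 1), (G n (K + 1) - G n K) = F (K + 1) K - F 0 K := by
      simp only [← h _ K]
      exact sum_range_sub (F · K) (K + 1)
    rw [sum_sub_distrib, sum_range_succ (G · K)] at column
    rw [sum_range_succ, sum_range_succ, ih, ← sub_eq_zero, ← sub_eq_zero.mpr column]
    abel

theorem IsWZPair.tsum_zero_eq [TopologicalSpace α] [IsTopologicalAddGroup α] [T2Space α]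
    {F G : ℕ → ℕ → α} (h : IsWZPair F G) (hF : Summable (F 0))
    (hdiag : Summable fun k => F (k + 1) k + G k k)
    (hG : Tendsto (fun K => ∑ n ∈ range K, G n K) atTop (𝓝 0)) :
    ∑' k, F 0 k = ∑' k, (F (k + 1) k + G k k) := by
  have hlim := hdiag.hasSum.tendsto_sum_nat.sub hG
  rw [sub_zero] at hlim
  simp only [← h.sum_range_zero_eq] at hlim
  exact tendsto_nhds_unique hF.hasSum.tendsto_sum_nat hlim

end WZPair

namespace AmdeberhanZeilberger

/-- The Beta integral `B(n + 1, k + 1)`. -/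
noncomputable def beta (n k : ℕ) : ℝ := n ! * k ! / (n + k + 1)!

theorem beta_pos (n k : ℕ) : 0 < beta n k := by
  unfold beta; positivity

theorem beta_comm (n k : ℕ) : beta n k = beta k n := by
  simp only [beta, mul_comm, add_comm n k]

theorem beta_zero_left (k : ℕ) : beta 0 k = 1 / (k + 1) := by
  rw [beta, zero_add, Nat.factorial_succ]
  push_cast
  field_simp
  simp

theorem beta_succ_right (n k : ℕ) : beta n (k + 1) = (k + 1) / (n + k + 2) * beta n k := by
  rw [beta, beta, show n + (k + 1) + 1 = n + k + 1 + 1 by ring, Nat.factorial_succ,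
    Nat.factorial_succ (n + k + 1)]
  push_cast
  field_simp
  ring

theorem beta_succ_left (n k : ℕ) : beta (n + 1) k = (n + 1) / (n + k + 2) * beta n k := by
  rw [beta_comm, beta_succ_right, beta_comm, add_comm (k : ℝ)]

theorem beta_le (n k : ℕ) : beta n k ≤ 1 / (k + 1) := by
  have hdvd := Nat.factorial_mul_factorial_dvd_factorial_add n (k + 1)
  have hle : ((n ! * (k + 1)! : ℕ) : ℝ) ≤ (n + k + 1)! := by
    rw [← add_assoc] at hdvd
    exact_mod_cast Nat.le_of_dvd (Nat.factorial_pos _) hdvd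
  rw [beta, div_le_div_iff₀ (by positivity) (by positivity)]
  push_cast [Nat.factorial_succ k] at hle
  linarith

noncomputable def kernel (n k : ℕ) : ℝ := beta n k ^ 4 * beta n n

/-- The WZ pair of Amdeberhan and Zeilberger. -/
noncomputable def F (n k : ℕ) : ℝ :=
  (-1) ^ n * (2 * n ^ 2 + 4 * n * k + 5 * n + 2 * k + 2) / 2 * kernel n k

noncomputable def G (n k : ℕ) : ℝ :=
  (-1) ^ n * (5 * n ^ 2 + 6 * n * k + 2 * k ^ 2 + 10 * n + 6 * k + 5) / 4 * kernel n k

theorem isWZPair_F_G : IsWZPair F G := by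
  intro n k
  simp only [F, G, kernel, beta_succ_left, beta_succ_right]
  push_cast
  field_simp
  ring

theorem F_zero_left (k : ℕ) : F 0 k = 1 / (k + 1) ^ 3 := by
  simp only [F, kernel, beta_zero_left]
  push_cast
  field_simp
  ring

theorem F_succ_self_add_G_self (n : ℕ) :
    F (n + 1) n + G n n = (-1) ^ n * (205 * n ^ 2 + 250 * n + 77) / 64 * beta n n ^ 5 := by
  simp only [F, G, kernel, beta_succ_left, beta_succ_right]
  push_cast
  field_simp
  ring

theorem kernel_pos (n k : ℕ) : 0 < kernel n k := by
  have := beta_pos n n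
  have := beta_pos n k
  unfold kernel
  positivity

theorem kernel_le (n k : ℕ) : kernel n k ≤ 1 / (k + 1) ^ 4 := by
  have hnn : beta n n ≤ 1 :=
    (beta_le n n).trans (div_le_one_of_le₀ (by linarith) (by positivity))
  calc kernel n k ≤ (1 / ((k : ℝ) + 1)) ^ 4 * 1 := by
        unfold kernel
        gcongr
        · exact (beta_pos n n).le
        · exact (beta_pos n k).le
        · exact beta_le n k
    _ = 1 / (k + 1) ^ 4 := by rw [mul_one, div_pow, one_pow]

theorem abs_G_le {n K : ℕ} (hn : n ≤ K) : |G n K| ≤ 13 / 4 / (K + 1) ^ 2 := by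
  have hnK : (n : ℝ) ≤ K := by exact_mod_cast hn
  rw [G, abs_mul, abs_div, abs_mul, abs_neg_one_pow, one_mul, abs_of_pos (by positivity),
    abs_of_pos (by positivity), abs_of_pos (kernel_pos n K)]
  calc (5 * (n : ℝ) ^ 2 + 6 * n * K + 2 * K ^ 2 + 10 * n + 6 * K + 5) / 4 * kernel n K
      ≤ 13 * ((K : ℝ) + 1) ^ 2 / 4 * (1 / ((K : ℝ) + 1) ^ 4) := by
        refine mul_le_mul ?_ (kernel_le n K) (kernel_pos n K).le (by positivity)
        gcongr
        nlinarith [(n.cast_nonneg : (0 : ℝ) ≤ n)]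
    _ = 13 / 4 / ((K : ℝ) + 1) ^ 2 := by field_simp

theorem abs_sum_G_le (K : ℕ) : |∑ n ∈ range K, G n K| ≤ 13 / 4 / (K + 1) := by
  calc |∑ n ∈ range K, G n K| ≤ ∑ n ∈ range K, |G n K| := abs_sum_le_sum_abs _ _
    _ ≤ K * (13 / 4 / ((K : ℝ) + 1) ^ 2) := by
        simpa using sum_le_card_nsmul _ _ _ fun n hn => abs_G_le (mem_range.mp hn).le
    _ ≤ ((K : ℝ) + 1) * (13 / 4 / ((K : ℝ) + 1) ^ 2) := by gcongr; linarith
    _ = 13 / 4 / (K + 1) := by field_simp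

theorem tendsto_sum_G : Tendsto (fun K => ∑ n ∈ range K, G n K) atTop (𝓝 0) := by
  refine squeeze_zero_norm abs_sum_G_le ?_
  simpa only [mul_zero, mul_one_div] using
    (tendsto_one_div_add_atTop_nhds_zero_nat (𝕜 := ℝ)).const_mul (13 / 4)

theorem summable_one_div_succ_pow_three : Summable fun k : ℕ => 1 / ((k : ℝ) + 1) ^ 3 := by
  simpa using (summable_nat_add_iff 1).mpr (Real.summable_one_div_nat_pow.mpr (by norm_num))

theorem abs_F_succ_self_add_G_self_le (n : ℕ) :
    |F (n + 1) n + G n n| ≤ 4 * (1 / ((n : ℝ) + 1) ^ 3) := by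
  rw [F_succ_self_add_G_self, abs_mul, abs_div, abs_mul, abs_neg_one_pow, one_mul,
    abs_of_pos (by positivity), abs_of_pos (by positivity), abs_pow, abs_of_pos (beta_pos n n)]
  calc (205 * (n : ℝ) ^ 2 + 250 * n + 77) / 64 * beta n n ^ 5
      ≤ 4 * ((n : ℝ) + 1) ^ 2 * (1 / ((n : ℝ) + 1)) ^ 5 := by
        refine mul_le_mul ?_ (pow_le_pow_left₀ (beta_pos n n).le (beta_le n n) 5)
          (by have := beta_pos n n; positivity) (by positivity)
        rw [div_le_iff₀ (by norm_num)]
        nlinarith [(n.cast_nonneg : (0 : ℝ) ≤ n)]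
    _ = 4 * (1 / ((n : ℝ) + 1) ^ 3) := by field_simp

theorem summable_F_zero_left : Summable (F 0) :=
  summable_one_div_succ_pow_three.congr fun k => (F_zero_left k).symm

theorem summable_F_succ_self_add_G_self : Summable fun n => F (n + 1) n + G n n :=
  .of_norm_bounded (summable_one_div_succ_pow_three.mul_left 4) abs_F_succ_self_add_G_self_le

end AmdeberhanZeilberger

theorem amdeberhan_zeilberger_zeta3 :
    ∑' n : ℕ, (-1 : ℝ) ^ n * (205 * (n : ℝ) ^ 2 + 250 * (n : ℝ) + 77) *
        ((n.factorial : ℝ)) ^ 10 / (64 * ((2 * n + 1).factorial : ℝ) ^ 5) =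
      ∑' k : ℕ, 1 / ((k : ℝ) + 1) ^ 3 := by
  have h := AmdeberhanZeilberger.isWZPair_F_G.tsum_zero_eq
    AmdeberhanZeilberger.summable_F_zero_left
    AmdeberhanZeilberger.summable_F_succ_self_add_G_self AmdeberhanZeilberger.tendsto_sum_G
  simp only [AmdeberhanZeilberger.F_zero_left, AmdeberhanZeilberger.F_succ_self_add_G_self] at h
  rw [h]
  refine tsum_congr fun n => ?_
  rw [AmdeberhanZeilberger.beta, ← two_mul]
  ring
end

section
/- For real numbers a, b and real z with |z| < 1 and |z/(z−1)| < 1 (and b not a nonpositive integer, b−a not a nonpositive integer), the Euler-type transformation ∑_{k=0}^∞ (a)_k/(b)_k · z^k = 1/(1−z) · ∑_{n=0}^∞ (b−a)_n/(b)_n · (z/(z−1))^n holds, where (x)_k denotes the rising factorial. -/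
/-!
Both sides are rearrangements of the double series
`∑_{n,m} (-1)^n c_n C(n+m, n) z^(n+m)` with `c_n = (b-a)_n / (b)_n`.
Summing over `m` first gives `c_n z^n / (1-z)^(n+1)`, hence the right-hand side; summing along
the antidiagonals `n + m = k` gives `z^k ∑_n (-1)^n C(k, n) c_n`, which is `(a)_k / (b)_k` by
the Chu–Vandermonde identity. The double series converges absolutely when `|z| < 1/2`. Otherwise
`w = z/(z-1)` satisfies `|w| < 1/2`, and the transformation is an involution
`(a, z) ↦ (b - a, w)`, so that case follows from the first.
-/

/-- The rising factorial (Pochhammer symbol) `(x)_n = x(x+1)⋯(x+n-1)` for real `x`. -/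
def riseFac (x : ℝ) (n : ℕ) : ℝ := ∏ i ∈ Finset.range n, (x + (i : ℝ))

open Finset Filter Topology

theorem HasSum.sum_antidiagonal {α A : Type*} [AddCommMonoid α] [TopologicalSpace α]
    [ContinuousAdd α] [RegularSpace α] [AddCommMonoid A] [HasAntidiagonal A] {f : A × A → α}
    {s : α} (hf : HasSum f s) : HasSum (fun k => ∑ p ∈ antidiagonal k, f p) s :=
  (HasAntidiagonal.sigmaAntidiagonalEquivProd.hasSum_iff.2 hf).sigma fun k =>
    sum_attach (antidiagonal k) f ▸ hasSum_fintype _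

section BinomialTransform

variable {𝕜 : Type*} [NontriviallyNormedField 𝕜]

lemma hasSum_neg_one_pow_mul_choose_mul_pow (n : ℕ) {z : 𝕜} (hz : ‖z‖ < 1) :
    HasSum (fun m => (-1) ^ n * ((m + n).choose n * z ^ m) * z ^ n)
      (1 / (1 - z) * (z / (z - 1)) ^ n) := by
  have h1z : 1 - z ≠ 0 := by rintro h; simp [← sub_eq_zero.1 h] at hz
  convert ((hasSum_choose_mul_geometric_of_norm_lt_one n hz).mul_left ((-1) ^ n)).mul_right
    (z ^ n) using 1
  · rfl
  rw [div_pow, ← neg_sub 1 z, neg_pow, pow_succ]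
  field_simp
  rw [← pow_mul, pow_mul', neg_one_sq, one_pow, mul_one]

theorem hasSum_binomialTransform_mul_pow [CompleteSpace 𝕜] (c : ℕ → 𝕜) {z : 𝕜} (hz : ‖z‖ < 1)
    (hc : Summable fun n => ‖c n‖ * (‖z‖ / (1 - ‖z‖)) ^ n) :
    HasSum (fun k => (∑ n ∈ range (k + 1), (k.choose n : 𝕜) * ((-1) ^ n * c n)) * z ^ k)
      (1 / (1 - z) * ∑' n, c n * (z / (z - 1)) ^ n) := by
  set F : ℕ × ℕ → 𝕜 :=
    fun p => c p.1 * ((-1) ^ p.1 * ((p.2 + p.1).choose p.1 * z ^ p.2) * z ^ p.1)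
  set G : ℕ × ℕ → ℝ := fun p => ‖c p.1‖ * ((p.2 + p.1).choose p.1 * ‖z‖ ^ p.2 * ‖z‖ ^ p.1)
  have h1z : 1 - ‖z‖ ≠ 0 := by linarith
  have hG_row (n : ℕ) :
      HasSum (fun m => G (n, m)) (1 / (1 - ‖z‖) * (‖c n‖ * (‖z‖ / (1 - ‖z‖)) ^ n)) := by
    have hr : ‖‖z‖‖ < 1 := by rwa [norm_norm]
    convert ((hasSum_choose_mul_geometric_of_norm_lt_one n hr).mul_right
      (‖z‖ ^ n)).mul_left ‖c n‖ using 1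
    · rfl
    rw [div_pow, pow_succ]
    field_simp
  have hFG (p : ℕ × ℕ) : ‖F p‖ ≤ G p := by
    simp only [F, G, norm_mul, norm_pow, norm_neg, norm_one, one_pow, one_mul]
    gcongr
    simpa using Nat.norm_cast_le (α := 𝕜) _
  have hF : Summable F := by
    refine .of_norm_bounded ((summable_prod_of_nonneg fun _ => by positivity).2
      ⟨fun n => (hG_row n).summable, ?_⟩) hFG
    simpa only [(hG_row _).tsum_eq] using hc.mul_left (1 / (1 - ‖z‖))
  have hF_antidiagonal (k : ℕ) : ∑ p ∈ antidiagonal k, F p =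
      (∑ n ∈ range (k + 1), (k.choose n : 𝕜) * ((-1) ^ n * c n)) * z ^ k := by
    rw [Nat.sum_antidiagonal_eq_sum_range_succ_mk, sum_mul]
    refine sum_congr rfl fun n hn => ?_
    obtain ⟨m, rfl⟩ := Nat.exists_eq_add_of_le (mem_range_succ_iff.1 hn)
    simp only [F, Nat.add_sub_cancel_left, add_comm m n, pow_add]
    ring
  have hF_rows := hF.hasSum.prod_fiberwise fun n =>
    (hasSum_neg_one_pow_mul_choose_mul_pow n hz).mul_left (c n)
  rw [← tsum_mul_left]
  convert hF.hasSum.sum_antidiagonal using 1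
  · exact funext fun k => (hF_antidiagonal k).symm
  · rw [← hF_rows.tsum_eq]
    exact tsum_congr fun n => mul_left_comm _ _ _

end BinomialTransform

lemma riseFac_succ (x : ℝ) (n : ℕ) : riseFac x (n + 1) = riseFac x n * (x + n) :=
  prod_range_succ _ _

lemma riseFac_succ' (x : ℝ) (n : ℕ) : riseFac x (n + 1) = x * riseFac (x + 1) n := by
  rw [riseFac, prod_range_succ', mul_comm, riseFac]
  simp only [Nat.cast_add, Nat.cast_one, Nat.cast_zero, add_zero, add_assoc, add_comm (1 : ℝ)]

lemma riseFac_add (x : ℝ) (m n : ℕ) : riseFac x (m + n) = riseFac x m * riseFac (x + m) n := by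
  simp only [riseFac, prod_range_add, Nat.cast_add, add_assoc]

lemma riseFac_ne_zero {x : ℝ} (hx : ∀ m : ℕ, x ≠ -m) (n : ℕ) : riseFac x n ≠ 0 :=
  prod_ne_zero_iff.mpr fun i _ h => hx i (eq_neg_of_add_eq_zero_left h)

/-- The Chu–Vandermonde identity. -/
lemma riseFac_sub_eq_sum (x : ℝ) (k : ℕ) (y : ℝ) :
    riseFac (y - x) k = ∑ n ∈ range (k + 1),
      (k.choose n : ℝ) * ((-1) ^ n * riseFac x n * riseFac (y + n) (k - n)) := by
  induction k generalizing y with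
  | zero => simp [riseFac]
  | succ k ih =>
    rw [sum_choose_succ_mul (fun i j => (-1) ^ i * riseFac x i * riseFac (y + i) j),
      ← sum_add_distrib, riseFac_succ', show y - x + 1 = y + 1 - x by ring, ih, mul_sum]
    refine sum_congr rfl fun n hn => ?_
    rw [show k + 1 - n = k - n + 1 by grind, riseFac_succ', riseFac_succ]
    push_cast
    rw [add_right_comm y 1, ← add_assoc]
    ring

lemma riseFac_div_riseFac_eq_sum (a : ℝ) {b : ℝ} (hb : ∀ m : ℕ, b ≠ -m) (k : ℕ) :
    riseFac a k / riseFac b k = ∑ n ∈ range (k + 1),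
      (k.choose n : ℝ) * ((-1) ^ n * (riseFac (b - a) n / riseFac b n)) := by
  rw [← sub_sub_cancel b a, riseFac_sub_eq_sum, sum_div, sub_sub_cancel]
  refine sum_congr rfl fun n hn => ?_
  obtain ⟨m, rfl⟩ := Nat.exists_eq_add_of_le (mem_range_succ_iff.1 hn)
  have hbnm := riseFac_ne_zero hb (n + m)
  rw [riseFac_add] at hbnm ⊢
  obtain ⟨hbn, hbm⟩ := mul_ne_zero_iff.1 hbnm
  rw [Nat.add_sub_cancel_left]
  field_simp

lemma summable_riseFac_div_riseFac_mul_pow (x b : ℝ) {q : ℝ} (hq : |q| < 1) :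
    Summable fun n => riseFac x n / riseFac b n * q ^ n := by
  have hratio : Tendsto (fun n : ℕ => |(x + n) / (b + n)| * |q|) atTop (𝓝 |q|) := by
    simpa using (tendsto_add_mul_div_add_mul_atTop_nhds x b 1 one_ne_zero).abs.mul_const |q|
  refine summable_of_ratio_norm_eventually_le (r := (1 + |q|) / 2) (by linarith) ?_
  filter_upwards [hratio.eventually_le_const (by linarith : |q| < (1 + |q|) / 2)] with n hn
  have hstep : riseFac x (n + 1) / riseFac b (n + 1) * q ^ (n + 1) =
      (x + n) / (b + n) * q * (riseFac x n / riseFac b n * q ^ n) := by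
    rw [riseFac_succ, riseFac_succ, mul_div_mul_comm, pow_succ]
    ring
  rw [hstep, norm_mul, norm_mul, Real.norm_eq_abs, Real.norm_eq_abs]
  gcongr

lemma euler_transformation_of_abs_lt_half (a : ℝ) {b z : ℝ} (hz : |z| < 1 / 2)
    (hb : ∀ m : ℕ, b ≠ -m) :
    ∑' k : ℕ, riseFac a k / riseFac b k * z ^ k =
      1 / (1 - z) * ∑' n : ℕ, riseFac (b - a) n / riseFac b n * (z / (z - 1)) ^ n := by
  have h1z : 0 < 1 - |z| := by linarith
  have hq : |(|z| / (1 - |z|))| < 1 := by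
    rw [abs_div, abs_abs, abs_of_pos h1z, div_lt_one h1z]
    linarith
  have hc := (summable_riseFac_div_riseFac_mul_pow (b - a) b hq).norm
  simp only [norm_mul, norm_pow, Real.norm_eq_abs,
    abs_of_nonneg (div_nonneg (abs_nonneg z) h1z.le)] at hc
  have h := hasSum_binomialTransform_mul_pow (fun n => riseFac (b - a) n / riseFac b n) (z := z)
    (by rw [Real.norm_eq_abs]; linarith) (by simpa only [Real.norm_eq_abs] using hc)
  simp only [← riseFac_div_riseFac_eq_sum a hb] at h
  exact h.tsum_eq

lemma abs_lt_half_or_abs_div_sub_one_lt_half {z : ℝ} (hz : |z| < 1) (hz' : |z / (z - 1)| < 1) :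
    |z| < 1 / 2 ∨ |z / (z - 1)| < 1 / 2 := by
  have h1z : 0 < 1 - z := by linarith [le_abs_self z]
  rw [abs_div, abs_of_neg (by linarith : z - 1 < 0), neg_sub, div_lt_iff₀ h1z] at hz' ⊢
  rcases abs_cases z with ⟨hz₀, -⟩ | ⟨hz₀, -⟩
  · left; linarith
  · right; linarith

theorem euler_transformation_general (a b z : ℝ) (hz : |z| < 1) (hz' : |z / (z - 1)| < 1)
    (hb : ∀ m : ℕ, b ≠ -(m : ℝ)) :
    ∑' k : ℕ, riseFac a k / riseFac b k * z ^ k =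
      (1 / (1 - z)) * ∑' n : ℕ, riseFac (b - a) n / riseFac b n * (z / (z - 1)) ^ n := by
  rcases abs_lt_half_or_abs_div_sub_one_lt_half hz hz' with hz₂ | hw
  · exact euler_transformation_of_abs_lt_half a hz₂ hb
  have hz1 : z - 1 ≠ 0 := by intro h; linarith [le_abs_self z]
  have h := euler_transformation_of_abs_lt_half (b - a) hw hb
  rw [sub_sub_cancel, show z / (z - 1) / (z / (z - 1) - 1) = z by field_simp; ring,
    show 1 / (1 - z / (z - 1)) = 1 - z by field_simp; ring] at h
  rw [h, ← mul_assoc, one_div_mul_cancel (by contrapose! hz1; linarith), one_mul]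

theorem euler_transformation (a b z : ℝ) (hz : |z| < 1) (hz' : |z / (z - 1)| < 1)
    (hb : ∀ m : ℕ, b ≠ -(m : ℝ)) (hba : ∀ m : ℕ, b - a ≠ -(m : ℝ)) :
    ∑' k : ℕ, riseFac a k / riseFac b k * z ^ k =
      (1 / (1 - z)) * ∑' n : ℕ, riseFac (b - a) n / riseFac b n * (z / (z - 1)) ^ n :=
  euler_transformation_general a b z hz hz' hb
end
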